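/- Let y = A·x_S + e where x_S ∈ ℝⁿ is K-sparse with support S, and A satisfies the RIP of order 4K with constant δ_{4K}. Let x' ∈ ℝⁿ be K-sparse with support S', and let h be a set of 2K indices such that |(Aᵀ(y − A x'))_i| ≥ |(Aᵀ(y − A x'))_j| for every i ∈ h and j ∉ h. Then ‖(x_S − x')_{\overline{h}}‖ ≤ √2·δ_{4K}·‖x_S − x'‖ + √(2(1+δ_{4K}))·‖e‖. -/

import Mathlib

open Finset

/-- Euclidean norm of a vector. -/
noncomputable def euclNorm {d : ℕ} (x : Fin d → ℝ) : ℝ := Real.sqrt (∑ i, x i ^ 2)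

/-- The support of a vector, as a finite set of indices. -/
noncomputable def supp {d : ℕ} (x : Fin d → ℝ) : Finset (Fin d) :=
  Finset.univ.filter (fun i => x i ≠ 0)

/-- `restrict x T` agrees with `x` on `T` and is zero outside `T`. -/
def restrict {d : ℕ} (x : Fin d → ℝ) (T : Finset (Fin d)) : Fin d → ℝ :=
  fun i => if i ∈ T then x i else 0

/-- `A` satisfies the Restricted Isometry Property of order `L` with constant `δ ∈ (0,1)`. -/
def RIP {m d : ℕ} (A : Matrix (Fin m) (Fin d) ℝ) (L : ℕ) (δ : ℝ) : Prop :=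
  0 < δ ∧ δ < 1 ∧
  ∀ x : Fin d → ℝ, (supp x).card ≤ L →
    (1 - δ) * euclNorm x ^ 2 ≤ euclNorm (A.mulVec x) ^ 2 ∧
    euclNorm (A.mulVec x) ^ 2 ≤ (1 + δ) * euclNorm x ^ 2

/-- `u` is the least-squares solution on the index set `U`: it is supported on `U` and
`y - A u` is orthogonal to `A z` whenever `z` is supported on `U`. -/
def LeastSq {m d : ℕ} (A : Matrix (Fin m) (Fin d) ℝ) (y : Fin m → ℝ)
    (U : Finset (Fin d)) (u : Fin d → ℝ) : Prop :=
  supp u ⊆ U ∧ ∀ z : Fin d → ℝ, supp z ⊆ U →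
    ∑ i, (y i - A.mulVec u i) * A.mulVec z i = 0

/-!
Write the residual correlation as `r + w` with `r = xS - x'` and `w = (AᵀA - 1) r + Aᵀ e`.
The entries of `r` that `h` misses are dominated, one for one, by entries of `h` outside the
support of `r`, where only `w` is seen; hence `‖r_{hᶜ}‖ ≤ √2 ‖w_Ω‖` for some `Ω` with `#Ω ≤ 4K`.
RIP bounds `‖w_Ω‖` by duality: for `z` supported in `Ω`,
`⟪z, w⟫ = ⟪Az, Ar⟫ - ⟪z, r⟫ + ⟪Az, e⟫ ≤ δ ‖z‖ ‖r‖ + √(1 + δ) ‖z‖ ‖e‖`.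
-/

open Matrix

section Euclidean

variable {d : ℕ}

theorem euclNorm_eq_norm (x : Fin d → ℝ) :
    euclNorm x = ‖(WithLp.toLp 2 x : EuclideanSpace ℝ (Fin d))‖ := by
  simp [euclNorm, EuclideanSpace.norm_eq]

theorem euclNorm_nonneg (x : Fin d → ℝ) : 0 ≤ euclNorm x := Real.sqrt_nonneg _

theorem euclNorm_sq (x : Fin d → ℝ) : euclNorm x ^ 2 = x ⬝ᵥ x := by
  rw [euclNorm, Real.sq_sqrt (by positivity)]
  simp [dotProduct, sq]

theorem euclNorm_eq_zero {x : Fin d → ℝ} : euclNorm x = 0 ↔ x = 0 := by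
  simp [euclNorm_eq_norm]

theorem euclNorm_sub_le (x y : Fin d → ℝ) :
    euclNorm (x - y) ≤ euclNorm x + euclNorm y := by
  simpa only [euclNorm_eq_norm, WithLp.toLp_sub] using norm_sub_le _ _

theorem euclNorm_smul (c : ℝ) (x : Fin d → ℝ) : euclNorm (c • x) = |c| * euclNorm x := by
  simp only [euclNorm_eq_norm, WithLp.toLp_smul, norm_smul, Real.norm_eq_abs]

theorem dotProduct_le_euclNorm_mul (x y : Fin d → ℝ) :
    x ⬝ᵥ y ≤ euclNorm x * euclNorm y := by
  have := real_inner_le_norm (WithLp.toLp 2 y : EuclideanSpace ℝ (Fin d)) (WithLp.toLp 2 x)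
  simpa [EuclideanSpace.inner_eq_star_dotProduct, euclNorm_eq_norm, mul_comm] using this

end Euclidean

section Support

variable {d : ℕ}

@[simp]
theorem mem_supp {x : Fin d → ℝ} {i : Fin d} : i ∈ supp x ↔ x i ≠ 0 := by
  simp [supp]

theorem supp_add_subset (x y : Fin d → ℝ) : supp (x + y) ⊆ supp x ∪ supp y := by
  intro i
  simp only [mem_supp, mem_union, Pi.add_apply]
  contrapose!
  rintro ⟨hx, hy⟩
  simp [hx, hy]

theorem supp_sub_subset (x y : Fin d → ℝ) : supp (x - y) ⊆ supp x ∪ supp y := by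
  simpa only [sub_eq_add_neg, supp, Pi.neg_apply, ne_eq, neg_eq_zero]
    using supp_add_subset x (-y)

theorem supp_smul_subset (c : ℝ) (x : Fin d → ℝ) : supp (c • x) ⊆ supp x := by
  intro i
  simp only [mem_supp, Pi.smul_apply, smul_eq_mul]
  exact right_ne_zero_of_mul

end Support

section Restrict

variable {d : ℕ}

theorem restrict_apply (x : Fin d → ℝ) (T : Finset (Fin d)) (i : Fin d) :
    restrict x T i = if i ∈ T then x i else 0 := rfl

theorem supp_restrict_subset (x : Fin d → ℝ) (T : Finset (Fin d)) :
    supp (restrict x T) ⊆ T := by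
  intro i hi
  by_contra hiT
  simp [restrict_apply, hiT] at hi

theorem restrict_add (x y : Fin d → ℝ) (T : Finset (Fin d)) :
    restrict (x + y) T = restrict x T + restrict y T := by
  ext i
  by_cases hi : i ∈ T <;> simp [restrict_apply, hi]

theorem restrict_empty (x : Fin d → ℝ) : restrict x ∅ = 0 := by
  ext i
  simp [restrict_apply]

theorem restrict_eq_restrict_inter {x : Fin d → ℝ} {T : Finset (Fin d)} (hx : supp x ⊆ T)
    (U : Finset (Fin d)) : restrict x U = restrict x (T ∩ U) := by
  ext i
  by_cases hiT : i ∈ T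
  · simp [restrict_apply, hiT]
  · have : x i = 0 := by simpa using mt (@hx i) hiT
    simp [restrict_apply, this]

theorem restrict_dotProduct_self (x : Fin d → ℝ) (T : Finset (Fin d)) :
    restrict x T ⬝ᵥ x = euclNorm (restrict x T) ^ 2 := by
  rw [euclNorm_sq]
  refine Finset.sum_congr rfl fun i _ => ?_
  by_cases hi : i ∈ T <;> simp [restrict_apply, hi]

theorem euclNorm_restrict (x : Fin d → ℝ) (T : Finset (Fin d)) :
    euclNorm (restrict x T) = √(∑ i ∈ T, x i ^ 2) := by
  simp only [euclNorm, restrict_apply, ite_pow, ne_eq, OfNat.ofNat_ne_zero, not_false_eq_true,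
    zero_pow, sum_ite_mem, univ_inter]

theorem euclNorm_restrict_mono (x : Fin d → ℝ) {U V : Finset (Fin d)} (hUV : U ⊆ V) :
    euclNorm (restrict x U) ≤ euclNorm (restrict x V) := by
  simp only [euclNorm_restrict]
  exact Real.sqrt_le_sqrt (sum_le_sum_of_subset_of_nonneg hUV fun i _ _ => sq_nonneg (x i))

theorem euclNorm_restrict_add_le (x : Fin d → ℝ) {P Q : Finset (Fin d)} (hPQ : Disjoint P Q) :
    euclNorm (restrict x P) + euclNorm (restrict x Q) ≤ √2 * euclNorm (restrict x (P ∪ Q)) := by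
  have hsq : euclNorm (restrict x (P ∪ Q)) ^ 2 =
      euclNorm (restrict x P) ^ 2 + euclNorm (restrict x Q) ^ 2 := by
    simp only [euclNorm_restrict, Real.sq_sqrt (sum_nonneg fun i _ => sq_nonneg (x i))]
    exact sum_union hPQ
  rw [← Real.sqrt_sq (euclNorm_nonneg (restrict x (P ∪ Q))), ← Real.sqrt_mul zero_le_two, hsq]
  exact Real.le_sqrt_of_sq_le add_sq_le

theorem euclNorm_restrict_le_of_dotProduct_le {v : Fin d → ℝ} {Ω : Finset (Fin d)} {c : ℝ}
    (hc : 0 ≤ c) (hv : ∀ z, supp z ⊆ Ω → z ⬝ᵥ v ≤ c * euclNorm z) :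
    euclNorm (restrict v Ω) ≤ c := by
  have h := hv _ (supp_restrict_subset v Ω)
  rw [restrict_dotProduct_self] at h
  nlinarith [euclNorm_nonneg (restrict v Ω)]

end Restrict

theorem Finset.sum_le_sum_of_card_le_of_forall_le {ι N : Type*} [AddCommMonoid N]
    [LinearOrder N] [IsOrderedAddMonoid N] {P Q : Finset ι} {f : ι → N} (hf : ∀ i ∈ Q, 0 ≤ f i)
    (hcard : #P ≤ #Q) (hle : ∀ j ∈ P, ∀ i ∈ Q, f j ≤ f i) : ∑ j ∈ P, f j ≤ ∑ i ∈ Q, f i := by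
  rcases Q.eq_empty_or_nonempty with rfl | hQ
  · simp [card_eq_zero.mp (Nat.le_zero.mp hcard)]
  obtain ⟨i₀, hi₀, hmin⟩ := Q.exists_min_image f hQ
  calc ∑ j ∈ P, f j ≤ #P • f i₀ := sum_le_card_nsmul P f (f i₀) fun j hj => hle j hj i₀ hi₀
    _ ≤ #Q • f i₀ := nsmul_le_nsmul_left (hf i₀ hi₀) hcard
    _ ≤ ∑ i ∈ Q, f i := card_nsmul_le_sum Q f (f i₀) hmin

section Identification

variable {d : ℕ}

theorem euclNorm_restrict_le_of_card_le_of_abs_le {u : Fin d → ℝ} {P Q : Finset (Fin d)}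
    (hcard : #P ≤ #Q) (hle : ∀ j ∈ P, ∀ i ∈ Q, |u j| ≤ |u i|) :
    euclNorm (restrict u P) ≤ euclNorm (restrict u Q) := by
  simp only [euclNorm_restrict]
  exact Real.sqrt_le_sqrt <| sum_le_sum_of_card_le_of_forall_le (fun i _ => sq_nonneg (u i))
    hcard fun j hj i hi => sq_le_sq.mpr (hle j hj i hi)

theorem euclNorm_restrict_compl_le {r w : Fin d → ℝ} {T h : Finset (Fin d)} (hr : supp r ⊆ T)
    (hcard : #T ≤ #h) (hident : ∀ i ∈ h, ∀ j ∉ h, |(r + w) j| ≤ |(r + w) i|) :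
    euclNorm (restrict r hᶜ) ≤ √2 * euclNorm (restrict w (T ∪ h)) := by
  have hrP : restrict r hᶜ = restrict r (T \ h) := by
    rw [restrict_eq_restrict_inter hr, sdiff_eq_inter_compl]
  have hrQ : restrict r (h \ T) = 0 := by
    rw [restrict_eq_restrict_inter hr, inter_sdiff_self, restrict_empty]
  have hsel : euclNorm (restrict (r + w) (T \ h)) ≤ euclNorm (restrict w (h \ T)) := by
    rw [← zero_add (restrict w (h \ T)), ← hrQ, ← restrict_add]
    exact euclNorm_restrict_le_of_card_le_of_abs_le (card_sdiff_le_card_sdiff_iff.mpr hcard)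
      fun j hj i hi => hident i (mem_sdiff.mp hi).1 j (mem_sdiff.mp hj).2
  calc euclNorm (restrict r hᶜ)
        = euclNorm (restrict (r + w) (T \ h) - restrict w (T \ h)) := by
        rw [hrP, restrict_add, add_sub_cancel_right]
    _ ≤ euclNorm (restrict w (h \ T)) + euclNorm (restrict w (T \ h)) :=
        (euclNorm_sub_le _ _).trans (by gcongr)
    _ ≤ √2 * euclNorm (restrict w (h \ T ∪ T \ h)) :=
        euclNorm_restrict_add_le w disjoint_sdiff_sdiff
    _ ≤ √2 * euclNorm (restrict w (T ∪ h)) := by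
        gcongr
        exact euclNorm_restrict_mono w (union_subset (sdiff_subset.trans subset_union_right)
          (sdiff_subset.trans subset_union_left))

end Identification

namespace RIP

variable {m d L : ℕ} {A : Matrix (Fin m) (Fin d) ℝ} {δ : ℝ}

theorem euclNorm_mulVec_le (hA : RIP A L δ) {x : Fin d → ℝ} (hx : #(supp x) ≤ L) :
    euclNorm (A *ᵥ x) ≤ √(1 + δ) * euclNorm x := by
  rw [← Real.sqrt_sq (euclNorm_nonneg (A *ᵥ x)), ← Real.sqrt_sq (euclNorm_nonneg x),
    ← Real.sqrt_mul (by linarith [hA.1])]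
  exact Real.sqrt_le_sqrt (hA.2.2 x hx).2

/-- Polarization: `4 ⟪Ax, Ay⟫ = ‖A(x + y)‖² - ‖A(x - y)‖²`, and RIP controls both terms. -/
theorem two_mul_abs_dotProduct_sub_le (hA : RIP A L δ) {x y : Fin d → ℝ}
    (hxy : #(supp x ∪ supp y) ≤ L) :
    2 * |A *ᵥ x ⬝ᵥ A *ᵥ y - x ⬝ᵥ y| ≤ δ * (euclNorm x ^ 2 + euclNorm y ^ 2) := by
  have hadd := hA.2.2 (x + y) ((card_le_card (supp_add_subset x y)).trans hxy)
  have hsub := hA.2.2 (x - y) ((card_le_card (supp_sub_subset x y)).trans hxy)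
  simp only [euclNorm_sq, mulVec_add, mulVec_sub, add_dotProduct, dotProduct_add, sub_dotProduct,
    dotProduct_sub, dotProduct_comm y x, dotProduct_comm (A *ᵥ y) (A *ᵥ x)] at hadd hsub ⊢
  rw [← abs_two, ← abs_mul, abs_le]
  constructor <;> linarith [hadd.1, hadd.2, hsub.1, hsub.2]

theorem abs_dotProduct_sub_le (hA : RIP A L δ) {x y : Fin d → ℝ}
    (hxy : #(supp x ∪ supp y) ≤ L) :
    |A *ᵥ x ⬝ᵥ A *ᵥ y - x ⬝ᵥ y| ≤ δ * euclNorm x * euclNorm y := by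
  rcases (euclNorm_nonneg x).eq_or_lt with hx | hx
  · rw [← hx]
    simp [euclNorm_eq_zero.mp hx.symm]
  rcases (euclNorm_nonneg y).eq_or_lt with hy | hy
  · rw [← hy]
    simp [euclNorm_eq_zero.mp hy.symm]
  -- rescale to equal norms `‖x‖ ‖y‖`, where `2ab ≤ a² + b²` is an equality
  have hscaled := hA.two_mul_abs_dotProduct_sub_le (x := euclNorm y • x) (y := euclNorm x • y)
    ((card_le_card (union_subset_union (supp_smul_subset _ x) (supp_smul_subset _ y))).trans hxy)
  have hdot :
      A *ᵥ (euclNorm y • x) ⬝ᵥ A *ᵥ (euclNorm x • y) - (euclNorm y • x) ⬝ᵥ (euclNorm x • y) =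
        (euclNorm x * euclNorm y) * (A *ᵥ x ⬝ᵥ A *ᵥ y - x ⬝ᵥ y) := by
    simp only [mulVec_smul, smul_dotProduct, dotProduct_smul, smul_eq_mul]
    ring
  rw [hdot, abs_mul, abs_of_pos (mul_pos hx hy), euclNorm_smul, euclNorm_smul, abs_of_pos hx,
    abs_of_pos hy] at hscaled
  refine le_of_mul_le_mul_left ?_ (mul_pos hx hy)
  linarith

theorem euclNorm_restrict_perturbation_le (hA : RIP A L δ) {r : Fin d → ℝ} (e : Fin m → ℝ)
    {Ω : Finset (Fin d)} (hr : supp r ⊆ Ω) (hΩ : #Ω ≤ L) :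
    euclNorm (restrict (Aᵀ *ᵥ (A *ᵥ r) - r + Aᵀ *ᵥ e) Ω) ≤
      δ * euclNorm r + √(1 + δ) * euclNorm e := by
  have hc : 0 ≤ δ * euclNorm r + √(1 + δ) * euclNorm e :=
    add_nonneg (mul_nonneg hA.1.le (euclNorm_nonneg r))
      (mul_nonneg (Real.sqrt_nonneg _) (euclNorm_nonneg e))
  refine euclNorm_restrict_le_of_dotProduct_le hc fun z hz => ?_
  have hzr : #(supp z ∪ supp r) ≤ L := (card_le_card (union_subset hz hr)).trans hΩ
  calc z ⬝ᵥ (Aᵀ *ᵥ (A *ᵥ r) - r + Aᵀ *ᵥ e)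
        = (A *ᵥ z ⬝ᵥ A *ᵥ r - z ⬝ᵥ r) + A *ᵥ z ⬝ᵥ e := by
        rw [dotProduct_add, dotProduct_sub, dotProduct_mulVec z Aᵀ, dotProduct_mulVec z Aᵀ,
          vecMul_transpose]
    _ ≤ δ * euclNorm z * euclNorm r + euclNorm (A *ᵥ z) * euclNorm e :=
        add_le_add ((le_abs_self _).trans (hA.abs_dotProduct_sub_le hzr))
          (dotProduct_le_euclNorm_mul _ _)
    _ ≤ δ * euclNorm z * euclNorm r + √(1 + δ) * euclNorm z * euclNorm e := by
        gcongr
        · exact euclNorm_nonneg e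
        · exact hA.euclNorm_mulVec_le ((card_le_card hz).trans hΩ)
    _ = (δ * euclNorm r + √(1 + δ) * euclNorm e) * euclNorm z := by ring

end RIP

/-- identification-step bound of CoSaMP. -/
theorem cosamp_identification_bound
    {m d K : ℕ} (A : Matrix (Fin m) (Fin d) ℝ) (xS x' : Fin d → ℝ) (e : Fin m → ℝ)
    (δ4 : ℝ)
    (S S' : Finset (Fin d))
    (hxS : supp xS ⊆ S) (hScard : S.card ≤ K)
    (hx' : supp x' ⊆ S') (hS'card : S'.card ≤ K)
    (hRIP4 : RIP A (4 * K) δ4)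
    (h : Finset (Fin d)) (hhcard : h.card = 2 * K)
    (hident : ∀ i ∈ h, ∀ j ∉ h,
      |A.transpose.mulVec (A.mulVec xS + e - A.mulVec x') j| ≤
        |A.transpose.mulVec (A.mulVec xS + e - A.mulVec x') i|) :
    euclNorm (restrict (xS - x') hᶜ) ≤
      Real.sqrt 2 * δ4 * euclNorm (xS - x') +
        Real.sqrt (2 * (1 + δ4)) * euclNorm e := by
  set r := xS - x'
  have hr : supp r ⊆ S ∪ S' := (supp_sub_subset xS x').trans (union_subset_union hxS hx')
  have hT : #(S ∪ S') ≤ #h := (card_union_le S S').trans (by omega)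
  have hΩ : #(S ∪ S' ∪ h) ≤ 4 * K := (card_union_le _ _).trans (by omega)
  have hresidual : Aᵀ *ᵥ (A *ᵥ xS + e - A *ᵥ x') = r + (Aᵀ *ᵥ (A *ᵥ r) - r + Aᵀ *ᵥ e) := by
    simp only [r, mulVec_sub, mulVec_add]
    abel
  rw [hresidual] at hident
  calc euclNorm (restrict r hᶜ)
      ≤ √2 * euclNorm (restrict (Aᵀ *ᵥ (A *ᵥ r) - r + Aᵀ *ᵥ e) (S ∪ S' ∪ h)) :=
        euclNorm_restrict_compl_le hr hT hident
    _ ≤ √2 * (δ4 * euclNorm r + √(1 + δ4) * euclNorm e) := by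
        gcongr
        exact hRIP4.euclNorm_restrict_perturbation_le e (hr.trans subset_union_left) hΩ
    _ = √2 * δ4 * euclNorm r + √(2 * (1 + δ4)) * euclNorm e := by
        rw [Real.sqrt_mul zero_le_two]
        ring
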